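/- Let J be a finite set and 𝒮 an irredundant covering family of subsets of J. Enumerate the minimal infeasible sets as E^1,…,E^t, with E^j = {e^j_1,…,e^j_{|E^j|}}. Define, for r equal to the maximum cardinality of a minimal infeasible set, the sets L^j_i = J \ {e^j_i} for i ≤ |E^j| and L^j_i = ∅ otherwise. Then this is a valid r-way independent branching scheme: a set T ⊆ J is feasible if and only if for each j ∈ [t] there exists i ∈ [r] with T ⊆ L^j_i. -/
import Mathlib


open Finset

def Feasible {α : Type*} (𝒮 : Finset (Finset α)) (T : Finset α) : Prop :=
  ∃ S ∈ 𝒮, T ⊆ S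

def MinInfeasible {α : Type*} (J : Finset α) (𝒮 : Finset (Finset α)) (E : Finset α) : Prop :=
  E ⊆ J ∧ ¬ Feasible 𝒮 E ∧ ∀ E' ⊂ E, Feasible 𝒮 E'

lemma exists_min_infeasible {α : Type*} [DecidableEq α] (J : Finset α) (𝒮 : Finset (Finset α)) :
    ∀ T : Finset α, T ⊆ J → ¬ Feasible 𝒮 T → ∃ E ⊆ T, MinInfeasible J 𝒮 E := by
  intro T
  induction T using Finset.strongInduction with
  | _ T ih =>
    intro hTJ hT
    by_cases h : ∀ E' ⊂ T, Feasible 𝒮 E'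
    · exact ⟨T, Finset.Subset.refl T, hTJ, hT, h⟩
    · push_neg at h
      obtain ⟨E', hE', hinf⟩ := h
      obtain ⟨E, hEE', hE⟩ := ih E' hE' (hE'.subset.trans hTJ) hinf
      exact ⟨E, hEE'.trans hE'.subset, hE⟩

/-- The branching scheme whose levels are indexed by the minimal infeasible sets `E`, with
alternatives `L = J \ {e}` for `e ∈ E` (padded with empty alternatives), is a valid
independent branching scheme: a set `T ⊆ J` is feasible iff for every minimal infeasible
set `E` there is `e ∈ E` with `T ⊆ J \ {e}`. -/
theorem stmt2 {α : Type*} [DecidableEq α] (J : Finset α) (𝒮 : Finset (Finset α))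
    (hcover : ∀ v ∈ J, ∃ S ∈ 𝒮, v ∈ S)
    (hsubJ : ∀ S ∈ 𝒮, S ⊆ J)
    (hirr : ∀ S ∈ 𝒮, ∀ T ∈ 𝒮, S ⊆ T → S = T) :
    ∀ T ⊆ J, (Feasible 𝒮 T ↔
      ∀ E : Finset α, MinInfeasible J 𝒮 E → ∃ e ∈ E, T ⊆ J.erase e) := by
  intro T hTJ
  constructor
  · rintro ⟨S, hS, hTS⟩ E ⟨hEJ, hEinf, _⟩
    have he : ∃ e ∈ E, e ∉ T := by
      by_contra h
      push_neg at h
      exact hEinf ⟨S, hS, fun e heE => hTS (h e heE)⟩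
    obtain ⟨e, heE, heT⟩ := he
    exact ⟨e, heE, fun x hx => Finset.mem_erase.mpr
      ⟨fun hxe => heT (hxe ▸ hx), hTJ hx⟩⟩
  · intro h
    by_contra hT
    obtain ⟨E, hET, hE⟩ := exists_min_infeasible J 𝒮 T hTJ hT
    obtain ⟨e, heE, hsub⟩ := h E hE
    exact (Finset.mem_erase.mp (hsub (hET heE))).1 rfl
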